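/- arXiv:1603.03361 — 2 statements merged into one kernel-verified Lean document; each statement's English description precedes it below -/
import Mathlib

section
/- If 𝔡 ≤ 𝔯, then there exists a bi-𝔡-unbounded set: a set X of infinite co-infinite subsets of ℕ of cardinality 𝔡 such that both X and {xᶜ : x ∈ X} are 𝔡-unbounded subsets of [ℕ]^∞. -/
open Set Cardinal Filter

/-- The increasing enumeration of a set of naturals (meaningful when the set is infinite). -/
noncomputable def enum (a : Set ℕ) : ℕ → ℕ := Nat.nth (· ∈ a)

/-- `a ⊎ b = {2k : k ∈ a} ∪ {2k+1 : k ∈ b}`. -/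
def usum (a b : Set ℕ) : Set ℕ := (fun k => 2 * k) '' a ∪ (fun k => 2 * k + 1) '' b

/-- A dominating family of functions. -/
def IsDominating (D : Set (ℕ → ℕ)) : Prop :=
  ∀ a : ℕ → ℕ, ∃ d ∈ D, ∀ᶠ n in Filter.atTop, a n ≤ d n

/-- The dominating number 𝔡. -/
noncomputable def dNum : Cardinal := sInf { c | ∃ D, IsDominating D ∧ c = #D }

/-- \`r\` reaps the family \`A\`. -/
def Reaps (r : Set ℕ) (A : Set (Set ℕ)) : Prop := ∀ a ∈ A, (a ∩ r).Infinite ∧ (a \ r).Infinite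

/-- The reaping number 𝔯. -/
noncomputable def rNum : Cardinal :=
  sInf { c | ∃ A : Set (Set ℕ), (∀ a ∈ A, a.Infinite) ∧
    (¬ ∃ r : Set ℕ, r.Infinite ∧ Reaps r A) ∧ c = #A }

/-! If `#F < 𝔡`, some `h` escapes every `g ∘ g` (`g ∈ F`, made
monotone). Cutting `ℕ` into the blocks `[uⱼ, uⱼ₊₁)` of the orbit `uⱼ₊₁ = H uⱼ` of a monotone
majorant `H > id` of `h`, each `g` satisfies `g uⱼ < uⱼ₊₁` for infinitely many `j`, since otherwise
`H ≤ g ∘ g` from some point on. As `#F < 𝔡 ≤ 𝔯`, one set `P` reaps all these index sets, and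
`x = ⋃_{j ∈ P} [uⱼ, uⱼ₊₁)` works: for a good `j ∉ P`, `x` misses `[uⱼ, uⱼ₊₁)`, so
`enum x uⱼ ≥ uⱼ₊₁ > g uⱼ`; good `j ∈ P` do the same for `xᶜ`.

Along a well-order of type `𝔡`, with a dominating family `(eᵢ)`, choose `xᵢ` escaping all `eⱼ`,
`j ≤ i`. A set `Y` bounded by `b ≤* eⱼ` can only contain `xᵢ` with `i < j`, so `#Y < 𝔡`. -/

universe u

section Cardinals

lemma exists_isDominating_mk_eq_dNum : ∃ D, IsDominating D ∧ dNum = #D :=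
  csInf_mem (s := {c | ∃ D, IsDominating D ∧ c = #D})
    ⟨_, univ, fun a => ⟨a, trivial, EventuallyLE.refl _ _⟩, rfl⟩

lemma dNum_le_mk {D : Set (ℕ → ℕ)} (hD : IsDominating D) : dNum ≤ #D :=
  csInf_le' ⟨D, hD, rfl⟩

lemma not_isDominating_of_mk_lt_dNum {F : Set (ℕ → ℕ)} (hF : #F < dNum) : ¬ IsDominating F :=
  fun hD => (dNum_le_mk hD).not_gt hF

lemma not_isDominating_of_countable {D : Set (ℕ → ℕ)} (hD : D.Countable) : ¬ IsDominating D := by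
  obtain ⟨f, hf⟩ := countable_iff_exists_subset_range.mp hD
  intro hdom
  obtain ⟨_, hd, hle⟩ := hdom fun n => partialSups (fun k => f k n) n + 1
  obtain ⟨k, rfl⟩ := hf hd
  obtain ⟨n, hkn, hn⟩ := ((eventually_ge_atTop k).and hle).exists
  have : f k n ≤ partialSups (fun k => f k n) n := le_partialSups_of_le (fun k => f k n) hkn
  omega

lemma aleph0_lt_dNum : ℵ₀ < dNum := by
  obtain ⟨D, hD, hcard⟩ := exists_isDominating_mk_eq_dNum
  rw [hcard, ← not_le, le_aleph0_iff_set_countable]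
  exact fun hc => not_isDominating_of_countable hc hD

lemma mk_insert_lt_dNum {α : Type} {s : Set α} (hs : #s < dNum) (a : α) :
    #(insert a s : Set α) < dNum :=
  mk_insert_le.trans_lt (add_lt_of_lt aleph0_lt_dNum.le hs (one_lt_aleph0.trans aleph0_lt_dNum))

lemma exists_reaps_of_mk_lt_rNum {A : Set (Set ℕ)} (hA : ∀ a ∈ A, a.Infinite) (hcard : #A < rNum) :
    ∃ r : Set ℕ, r.Infinite ∧ Reaps r A := by
  by_contra hr
  exact (csInf_le' ⟨A, hA, hr, rfl⟩ : rNum ≤ #A).not_gt hcard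

end Cardinals

section Majorant

def incrMajorant (a : ℕ → ℕ) (n : ℕ) : ℕ := partialSups a n + n + 1

lemma le_incrMajorant (a : ℕ → ℕ) : a ≤ incrMajorant a :=
  fun n => (le_partialSups a n).trans (Nat.le_add_right _ _ |>.trans (Nat.le_succ _))

lemma lt_incrMajorant (a : ℕ → ℕ) (n : ℕ) : n < incrMajorant a n := by
  unfold incrMajorant; omega

lemma monotone_incrMajorant (a : ℕ → ℕ) : Monotone (incrMajorant a) := fun m n hmn => by
  have := (partialSups a).monotone hmn
  unfold incrMajorant; omega

end Majorant

section Blocks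

lemma not_enum_eventuallyLE {s : Set ℕ} (hs : s.Infinite) {u : ℕ → ℕ} (hu : StrictMono u)
    {J : Set ℕ} (hJ : J.Infinite) (hblock : ∀ j ∈ J, ∀ w ∈ s, u j ≤ w → u (j + 1) ≤ w)
    {g : ℕ → ℕ} (hg : ∀ j ∈ J, g (u j) < u (j + 1)) : ¬ enum s ≤ᶠ[atTop] g := by
  have hsub : u '' J ⊆ {n | g n < enum s n} := by
    rintro _ ⟨j, hj, rfl⟩
    have hmem : enum s (u j) ∈ s := Nat.nth_mem_of_infinite hs (u j)
    exact (hg j hj).trans_le (hblock j hj _ hmem ((Nat.nth_strictMono hs).id_le (u j)))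
  simp only [EventuallyLE, not_eventually, not_le]
  exact Nat.frequently_atTop_iff_infinite.mpr ((hJ.image hu.injective.injOn).mono hsub)

def blockUnion (u : ℕ → ℕ) (P : Set ℕ) : Set ℕ := ⋃ j ∈ P, Ico (u j) (u (j + 1))

variable {u : ℕ → ℕ} {P : Set ℕ} {j w : ℕ}

lemma succ_le_of_mem_blockUnion (hu : StrictMono u) (hj : j ∉ P) (hw : w ∈ blockUnion u P)
    (hjw : u j ≤ w) : u (j + 1) ≤ w := by
  simp only [blockUnion, mem_iUnion, mem_Ico] at hw
  obtain ⟨k, hk, hkw, hwk⟩ := hw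
  rcases lt_trichotomy k j with hkj | rfl | hjk
  · exact absurd (hu.monotone (show k + 1 ≤ j from hkj)) (by omega)
  · exact absurd hk hj
  · exact (hu.monotone hjk).trans hkw

lemma succ_le_of_notMem_blockUnion (hj : j ∈ P) (hw : w ∉ blockUnion u P) (hjw : u j ≤ w) :
    u (j + 1) ≤ w := by
  by_contra hlt
  exact hw (mem_biUnion hj ⟨hjw, not_le.mp hlt⟩)

lemma image_subset_blockUnion (hu : StrictMono u) : u '' P ⊆ blockUnion u P := by
  rintro _ ⟨j, hj, rfl⟩
  exact mem_biUnion hj ⟨le_rfl, hu (Nat.lt_succ_self j)⟩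

lemma image_compl_subset_compl_blockUnion (hu : StrictMono u) : u '' Pᶜ ⊆ (blockUnion u P)ᶜ := by
  rintro _ ⟨j, hj, rfl⟩ hmem
  exact (succ_le_of_mem_blockUnion hu hj hmem le_rfl).not_gt (hu (Nat.lt_succ_self j))

end Blocks

lemma StrictMono.exists_apply_le_lt_apply_succ {u : ℕ → ℕ} (hu : StrictMono u) {n : ℕ}
    (hn : u 0 ≤ n) : ∃ j, u j ≤ n ∧ n < u (j + 1) := by
  obtain ⟨j, hjn, hnj⟩ :=
    hu.exists_between_of_tendsto_atTop hu.tendsto_atTop (x := n + 1) (Nat.lt_succ_of_le hn)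
  exact ⟨j, Nat.le_of_lt_succ hjn, Nat.lt_of_succ_le hnj⟩

lemma infinite_setOf_lt_iterate_succ {H g : ℕ → ℕ} (hH : Monotone H) (hHid : ∀ n, n < H n)
    (hg : Monotone g) (hesc : ¬ H ≤ᶠ[atTop] g ∘ g) :
    {j | g (H^[j] 0) < H^[j + 1] 0}.Infinite := by
  set u : ℕ → ℕ := fun j => H^[j] 0
  have hsucc : ∀ j, u (j + 1) = H (u j) := fun j => Function.iterate_succ_apply' H j 0
  have hu : StrictMono u := strictMono_nat_of_lt_succ fun j => (hsucc j).symm ▸ hHid (u j)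
  contrapose! hesc
  obtain ⟨J, hJ⟩ := eventually_atTop.mp
    (not_frequently.mp (Nat.frequently_atTop_iff_infinite.not.mpr (not_infinite.mpr hesc)))
  refine eventually_atTop.mpr ⟨u J, fun n hn => ?_⟩
  obtain ⟨j, hjn, hnj⟩ := hu.exists_apply_le_lt_apply_succ ((hu.monotone (Nat.zero_le J)).trans hn)
  have hJj : J ≤ j := Nat.lt_succ_iff.mp (hu.lt_iff_lt.mp (hn.trans_lt hnj))
  calc H n ≤ H (u (j + 1)) := hH hnj.le
    _ = u (j + 2) := (hsucc (j + 1)).symm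
    _ ≤ g (u (j + 1)) := not_lt.mp (hJ (j + 1) (by omega))
    _ ≤ g (g (u j)) := hg (not_lt.mp (hJ j hJj))
    _ ≤ g (g n) := hg (hg hjn)

def IsBiEscaping (F : Set (ℕ → ℕ)) (x : Set ℕ) : Prop :=
  x.Infinite ∧ xᶜ.Infinite ∧ ∀ g ∈ F, ¬ enum x ≤ᶠ[atTop] g ∧ ¬ enum xᶜ ≤ᶠ[atTop] g

lemma exists_isBiEscaping_of_monotone (hdr : dNum ≤ rNum) {F : Set (ℕ → ℕ)} (hF : #F < dNum)
    (hmono : ∀ g ∈ F, Monotone g) : ∃ x, IsBiEscaping F x := by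
  obtain ⟨h₀, hh₀⟩ : ∃ h₀ : ℕ → ℕ, ∀ g ∈ F, ¬ h₀ ≤ᶠ[atTop] g ∘ g := by
    have := not_isDominating_of_mk_lt_dNum
      (mk_image_le.trans_lt hF : #((fun g => g ∘ g) '' F) < dNum)
    simp only [IsDominating, not_forall, not_exists, not_and] at this
    obtain ⟨h₀, hh₀⟩ := this
    exact ⟨h₀, fun g hg => hh₀ _ ⟨g, hg, rfl⟩⟩
  set H := incrMajorant h₀
  set u : ℕ → ℕ := fun j => H^[j] 0
  have hu : StrictMono u := strictMono_nat_of_lt_succ fun j => by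
    simp only [u, Function.iterate_succ_apply']; exact lt_incrMajorant h₀ _
  set E : (ℕ → ℕ) → Set ℕ := fun g => {j | g (u j) < u (j + 1)}
  have hE : ∀ g ∈ F, (E g).Infinite := fun g hg =>
    infinite_setOf_lt_iterate_succ (monotone_incrMajorant h₀) (lt_incrMajorant h₀) (hmono g hg)
      fun hle => hh₀ g hg (EventuallyLE.trans (Eventually.of_forall (le_incrMajorant h₀)) hle)
  obtain ⟨P, -, hP⟩ := exists_reaps_of_mk_lt_rNum (A := insert Set.univ (E '' F))
    (by rintro _ (rfl | ⟨g, hg, rfl⟩); exacts [infinite_univ, hE g hg])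
    ((mk_insert_lt_dNum (mk_image_le.trans_lt hF) Set.univ).trans_le hdr)
  obtain ⟨hPinf, hPcinf⟩ := hP Set.univ (mem_insert _ _)
  rw [univ_inter] at hPinf
  rw [← compl_eq_univ_sdiff] at hPcinf
  have hx : (blockUnion u P).Infinite :=
    (hPinf.image hu.injective.injOn).mono (image_subset_blockUnion hu)
  have hxc : (blockUnion u P)ᶜ.Infinite :=
    (hPcinf.image hu.injective.injOn).mono (image_compl_subset_compl_blockUnion hu)
  refine ⟨blockUnion u P, hx, hxc, fun g hg => ?_⟩
  obtain ⟨hgP, hgPc⟩ := hP (E g) (mem_insert_of_mem _ (mem_image_of_mem E hg))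
  exact ⟨not_enum_eventuallyLE hx hu hgPc (fun j hj _ => succ_le_of_mem_blockUnion hu hj.2)
      fun j hj => hj.1,
    not_enum_eventuallyLE hxc hu hgP (fun j hj _ => succ_le_of_notMem_blockUnion hj.2)
      fun j hj => hj.1⟩

lemma exists_isBiEscaping (hdr : dNum ≤ rNum) {F : Set (ℕ → ℕ)} (hF : #F < dNum) :
    ∃ x, IsBiEscaping F x := by
  obtain ⟨x, hx, hxc, hesc⟩ := exists_isBiEscaping_of_monotone hdr (F := incrMajorant '' F)
    (mk_image_le.trans_lt hF) (by rintro _ ⟨g, -, rfl⟩; exact monotone_incrMajorant g)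
  refine ⟨x, hx, hxc, fun g hg => ?_⟩
  have hmaj : g ≤ᶠ[atTop] incrMajorant g := Eventually.of_forall (le_incrMajorant g)
  obtain ⟨hxg, hxcg⟩ := hesc _ (mem_image_of_mem _ hg)
  exact ⟨fun h => hxg (h.trans hmaj), fun h => hxcg (h.trans hmaj)⟩

lemma exists_injective_isBiEscaping {ι : Type} [LinearOrder ι] [WellFoundedLT ι]
    (hdr : dNum ≤ rNum) (hι : ∀ i : ι, #(Iio i) < dNum) (e : ι → ℕ → ℕ) :
    ∃ x : ι → Set ℕ, Function.Injective x ∧ ∀ i, IsBiEscaping (e '' Iic i) (x i) := by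
  -- escaping the enumerations of the earlier sets as well makes the family injective
  let tests (i : ι) (y : ∀ j < i, Set ℕ) : Set (ℕ → ℕ) :=
    e '' Iic i ∪ range fun j : Iio i => enum (y j j.2)
  have htests : ∀ i y, #(tests i y) < dNum := fun i y => by
    refine (mk_union_le _ _).trans_lt
      (add_lt_of_lt aleph0_lt_dNum.le ?_ (mk_range_le.trans_lt (hι i)))
    rw [← Iio_insert]
    exact mk_image_le.trans_lt (mk_insert_lt_dNum (hι i) i)
  obtain ⟨x, hfix⟩ : ∃ x : ι → Set ℕ,
      ∀ i, x i = Classical.epsilon (IsBiEscaping (tests i fun j _ => x j)) :=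
    ⟨_, wellFounded_lt.fix_eq fun i y => Classical.epsilon (IsBiEscaping (tests i y))⟩
  have hx : ∀ i, IsBiEscaping (tests i fun j _ => x j) (x i) := fun i => by
    rw [hfix i]
    exact Classical.epsilon_spec (exists_isBiEscaping hdr (htests i fun j _ => x j))
  have hne : ∀ {i j}, j < i → x i ≠ x j := fun {i j} hji hij =>
    ((hx i).2.2 _ (Or.inr ⟨⟨j, hji⟩, rfl⟩)).1 (hij ▸ EventuallyLE.refl _ _)
  refine ⟨x, fun i j hij => ?_, fun i => ⟨(hx i).1, (hx i).2.1, fun g hg => (hx i).2.2 g (.inl hg)⟩⟩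
  rcases lt_trichotomy i j with hlt | heq | hlt
  exacts [(hne hlt hij.symm).elim, heq, (hne hlt hij).elim]

lemma mk_lt_of_subset_range_of_forall_le {ι α : Type u} [LinearOrder ι] {κ : Cardinal}
    (hι : ∀ i : ι, #(Iio i) < κ) {e : ι → ℕ → ℕ} (he : IsDominating (range e)) {x : ι → α}
    {φ : α → ℕ → ℕ} (hesc : ∀ i j, j ≤ i → ¬ φ (x i) ≤ᶠ[atTop] e j) {Y : Set α} (hY : Y ⊆ range x)
    {b : ℕ → ℕ} (hb : ∀ y ∈ Y, ∀ n, φ y n ≤ b n) : #Y < κ := by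
  obtain ⟨_, ⟨j, rfl⟩, hbj⟩ := he b
  have hsub : Y ⊆ x '' Iio j := fun y hy => by
    obtain ⟨i, rfl⟩ := hY hy
    refine ⟨i, not_le.mp fun hji => hesc i j hji ?_, rfl⟩
    exact EventuallyLE.trans (Eventually.of_forall (hb _ hy)) hbj
  exact (mk_le_mk_of_subset hsub).trans_lt (mk_image_le.trans_lt (hι j))

lemma exists_isDominating_range : ∃ e : (ord dNum).ToType → ℕ → ℕ, IsDominating (range e) := by
  obtain ⟨D, hD, hcard⟩ := exists_isDominating_mk_eq_dNum
  obtain ⟨f⟩ : Nonempty ((ord dNum).ToType ≃ D) :=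
    Cardinal.eq.mp (by rw [mk_toType, card_ord, hcard])
  refine ⟨fun i => f i, fun a => ?_⟩
  obtain ⟨d, hd, had⟩ := hD a
  exact ⟨d, ⟨f.symm ⟨d, hd⟩, by simp⟩, had⟩

theorem stmt9 (h : dNum ≤ rNum) :
    ∃ X : Set (Set ℕ), (∀ x ∈ X, x.Infinite ∧ xᶜ.Infinite) ∧ #X = dNum ∧
      (∀ Y ⊆ X, (∃ b : Set ℕ, b.Infinite ∧ ∀ y ∈ Y, ∀ n, enum y n ≤ enum b n) → #Y < dNum) ∧
      (∀ Y ⊆ X, (∃ b : Set ℕ, b.Infinite ∧ ∀ y ∈ Y, ∀ n, enum yᶜ n ≤ enum b n) → #Y < dNum) := by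
  obtain ⟨e, he⟩ := exists_isDominating_range
  have hι : ∀ i : (ord dNum).ToType, #(Iio i) < dNum := fun i => by
    simpa only [mk_toType, card_ord] using
      mk_Iio_lt i (by rw [mk_toType, card_ord, Ordinal.type_toType])
  obtain ⟨x, hinj, hx⟩ := exists_injective_isBiEscaping h hι e
  have hesc : ∀ i j, j ≤ i → ¬ enum (x i) ≤ᶠ[atTop] e j ∧ ¬ enum (x i)ᶜ ≤ᶠ[atTop] e j :=
    fun i j hji => (hx i).2.2 (e j) (mem_image_of_mem e hji)
  refine ⟨range x, ?_, ?_, ?_, ?_⟩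
  · rintro _ ⟨i, rfl⟩
    exact ⟨(hx i).1, (hx i).2.1⟩
  · rw [mk_range_eq x hinj, mk_toType, card_ord]
  · rintro Y hY ⟨b, -, hb⟩
    exact mk_lt_of_subset_range_of_forall_le hι he (fun i j hji => (hesc i j hji).1) hY hb
  · rintro Y hY ⟨b, -, hb⟩
    exact mk_lt_of_subset_range_of_forall_le hι he (φ := fun y => enum yᶜ)
      (fun i j hji => (hesc i j hji).2) hY hb
end

section
/- For every semifilter S on ℕ there exists an S-scale: a set X ⊆ [ℕ]^∞ of cardinality 𝔟(S) such that for every b ∈ [ℕ]^∞ there is c ∈ [ℕ]^∞ with b ≤_{S⁺} c ≤_S x for all but fewer than 𝔟(S) elements x ∈ X. -/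
open Set Cardinal Filter

/-- A semifilter: a nonempty family of infinite subsets of ℕ closed under almost-supersets. -/
def IsSemifilter (S : Set (Set ℕ)) : Prop :=
  S.Nonempty ∧ (∀ s ∈ S, s.Infinite) ∧
    ∀ s ∈ S, ∀ b : Set ℕ, b.Infinite → (s \ b).Finite → b ∈ S

/-- \`a ≤_S b\`: the set \`[a ≤ b]\` of agreement of the enumerations belongs to \`S\`. -/
def leS (S : Set (Set ℕ)) (a b : Set ℕ) : Prop := {n | enum a n ≤ enum b n} ∈ S

/-- \`S⁺\`, the dual semifilter. -/
def splus (S : Set (Set ℕ)) : Set (Set ℕ) := {a | a.Infinite ∧ aᶜ ∉ S}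

/-- \`𝔟(S)\`: the least cardinality of a \`≤_S\`-unbounded family in \`[ℕ]^∞\`. -/
noncomputable def bofS (S : Set (Set ℕ)) : Cardinal :=
  sInf { c | ∃ X : Set (Set ℕ), (∀ x ∈ X, x.Infinite) ∧
    (¬ ∃ b : Set ℕ, b.Infinite ∧ ∀ x ∈ X, leS S x b) ∧ c = #X }

/-- An \`S\`-scale. -/
def IsScale (S X : Set (Set ℕ)) : Prop :=
  (∀ x ∈ X, x.Infinite) ∧ bofS S ≤ #X ∧
  ∀ b : Set ℕ, b.Infinite → ∃ c : Set ℕ, c.Infinite ∧ leS (splus S) b c ∧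
    #{x ∈ X | ¬ leS S c x} < bofS S

/-- A cofinal \`S\`-scale. -/
def IsCofinalScale (S X : Set (Set ℕ)) : Prop :=
  (∀ x ∈ X, x.Infinite) ∧ bofS S ≤ #X ∧
  ∀ b : Set ℕ, b.Infinite → #{x ∈ X | ¬ leS S b x} < bofS S

/-- A filter: a semifilter closed under finite intersections. -/
def IsSetFilter (F : Set (Set ℕ)) : Prop :=
  IsSemifilter F ∧ ∀ a ∈ F, ∀ b ∈ F, a ∩ b ∈ F

/-!
Enumerate a `≤_S`-unbounded family of size `𝔟(S)` as `(b i)` along the initial well-order of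
type `𝔟(S)`. Each proper initial segment has fewer than `𝔟(S)` members, hence a `≤_S`-bound, so
`b i` can be raised to some `x i` that `≤_S`-dominates every `b j` with `j ≤ i`; the `x i` still
dominate the `b i`, so they form an unbounded family of size `𝔟(S)`. Given any `b`, some `b i₀`
satisfies `b ≤_{S⁺} b i₀`, since otherwise `b` would bound all the `b i`. Then `c := b i₀` works:
`c ≤_S x i` for all `i ≥ i₀`, and there are fewer than `𝔟(S)` indices below `i₀`.
-/

theorem enum_strictMono {a : Set ℕ} (ha : a.Infinite) : StrictMono (enum a) :=
  Nat.nth_strictMono ha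

theorem enum_range_of_strictMono {f : ℕ → ℕ} (hf : StrictMono f) : enum (range f) = f := by
  have hinf : ∀ {n : ℕ} (h : (range f).Finite), n < h.toFinset.card :=
    fun h => absurd h (infinite_range_of_injective hf.injective)
  funext n
  refine (Nat.eq_nth_of_strictMonoOn_of_mapsTo_of_surjOn (p := (· ∈ range f)) f ?_ ?_
    (hf.strictMonoOn _) (fun h => hinf h)).symm
  · rintro _ ⟨k, rfl⟩
    exact ⟨k, fun h => hinf h, rfl⟩
  · exact fun k _ => ⟨k, rfl⟩

theorem exists_infinite_enum_eq {f : ℕ → ℕ} (hf : StrictMono f) :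
    ∃ a : Set ℕ, a.Infinite ∧ enum a = f :=
  ⟨range f, infinite_range_of_injective hf.injective, enum_range_of_strictMono hf⟩

namespace IsSemifilter

variable {S : Set (Set ℕ)}

theorem mem_of_superset (hS : IsSemifilter S) {s t : Set ℕ} (hs : s ∈ S) (hst : s ⊆ t) :
    t ∈ S :=
  hS.2.2 s hs t ((hS.2.1 s hs).mono hst) (by rw [sdiff_eq_empty.2 hst]; exact finite_empty)

theorem mem_of_compl_finite (hS : IsSemifilter S) {t : Set ℕ} (ht : tᶜ.Finite) : t ∈ S := by
  obtain ⟨s, hs⟩ := hS.1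
  exact hS.2.2 s hs t (by simpa using ht.infinite_compl) (ht.subset fun _ hx => hx.2)

theorem leS_of_enum_le (hS : IsSemifilter S) {a b : Set ℕ} (h : ∀ n, enum a n ≤ enum b n) :
    leS S a b :=
  hS.mem_of_compl_finite (by simp [h])

theorem leS_of_leS_of_enum_le (hS : IsSemifilter S) {a b c : Set ℕ} (hab : leS S a b)
    (hbc : ∀ n, enum b n ≤ enum c n) : leS S a c :=
  hS.mem_of_superset hab fun n hn => le_trans hn (hbc n)

theorem leS_of_enum_le_of_leS (hS : IsSemifilter S) {a b c : Set ℕ}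
    (hab : ∀ n, enum a n ≤ enum b n) (hbc : leS S b c) : leS S a c :=
  hS.mem_of_superset hbc fun n hn => le_trans (hab n) hn

theorem leS_of_not_leS_splus (hS : IsSemifilter S) {a b : Set ℕ} (h : ¬ leS (splus S) a b) :
    leS S b a := by
  simp only [leS, splus, mem_ofPred_eq, not_and_or, not_infinite, not_not] at h
  rcases h with hfin | hcompl
  · refine hS.mem_of_compl_finite (hfin.subset fun n hn => ?_)
    exact le_of_not_ge (show ¬ enum b n ≤ enum a n from hn)
  · refine hS.mem_of_superset hcompl fun n hn => ?_
    exact le_of_not_ge (show ¬ enum a n ≤ enum b n from hn)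

end IsSemifilter

def IsUnbounded (S X : Set (Set ℕ)) : Prop :=
  ¬ ∃ b : Set ℕ, b.Infinite ∧ ∀ x ∈ X, leS S x b

section Unbounded

variable {S : Set (Set ℕ)}

theorem IsUnbounded.mono_enum (hS : IsSemifilter S) {B X : Set (Set ℕ)} (hB : IsUnbounded S B)
    (h : ∀ y ∈ B, ∃ x ∈ X, ∀ n, enum y n ≤ enum x n) : IsUnbounded S X := by
  rintro ⟨c, hc, hX⟩
  refine hB ⟨c, hc, fun y hy => ?_⟩
  obtain ⟨x, hx, hyx⟩ := h y hy
  exact hS.leS_of_enum_le_of_leS hyx (hX x hx)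

theorem IsUnbounded.exists_leS_splus (hS : IsSemifilter S) {B : Set (Set ℕ)}
    (hB : IsUnbounded S B) {b : Set ℕ} (hb : b.Infinite) : ∃ y ∈ B, leS (splus S) b y := by
  by_contra! h
  exact hB ⟨b, hb, fun y hy => hS.leS_of_not_leS_splus (h y hy)⟩

theorem isUnbounded_infinite (hS : IsSemifilter S) : IsUnbounded S {a : Set ℕ | a.Infinite} := by
  rintro ⟨c, hc, hall⟩
  obtain ⟨a, ha, hae⟩ := exists_infinite_enum_eq (f := fun n => enum c n + 1)
    fun m n hmn => Nat.succ_lt_succ (enum_strictMono hc hmn)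
  have hempty : {n | enum a n ≤ enum c n} = ∅ := by simp [hae]
  exact (hS.2.1 _ (hempty ▸ hall a ha)).nonempty.ne_empty rfl

theorem bofS_le_mk {X : Set (Set ℕ)} (hX : ∀ x ∈ X, x.Infinite) (hunb : IsUnbounded S X) :
    bofS S ≤ #X :=
  csInf_le' ⟨X, hX, hunb, rfl⟩

theorem exists_isUnbounded_mk_eq_bofS (hS : IsSemifilter S) :
    ∃ X : Set (Set ℕ), (∀ x ∈ X, x.Infinite) ∧ IsUnbounded S X ∧ #X = bofS S := by
  obtain ⟨X, hX, hunb, hcard⟩ :=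
    csInf_mem (s := {c | ∃ X : Set (Set ℕ), (∀ x ∈ X, x.Infinite) ∧ IsUnbounded S X ∧ c = #X})
      ⟨_, _, fun _ h => h, isUnbounded_infinite hS, rfl⟩
  exact ⟨X, hX, hunb, hcard.symm⟩

theorem exists_leS_of_mk_lt_bofS {Y : Set (Set ℕ)} (hY : ∀ y ∈ Y, y.Infinite)
    (hcard : #Y < bofS S) : ∃ u : Set ℕ, u.Infinite ∧ ∀ y ∈ Y, leS S y u := by
  by_contra h
  exact (bofS_le_mk hY h).not_gt hcard

end Unbounded

section Tower

variable {S : Set (Set ℕ)} {ι : Type}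

theorem exists_tower [PartialOrder ι] (hS : IsSemifilter S) {b : ι → Set ℕ}
    (hb : ∀ i, (b i).Infinite) (hsmall : ∀ i : ι, #(Iio i) < bofS S) :
    ∃ x : ι → Set ℕ, (∀ i, (x i).Infinite) ∧ (∀ i n, enum (b i) n ≤ enum (x i) n) ∧
      ∀ i j, j ≤ i → leS S (b j) (x i) := by
  have hbound : ∀ i, ∃ u : Set ℕ, u.Infinite ∧ ∀ y ∈ b '' Iio i, leS S y u := fun i =>
    exists_leS_of_mk_lt_bofS (by rintro _ ⟨j, -, rfl⟩; exact hb j)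
      (mk_image_le.trans_lt (hsmall i))
  choose u hu hub using hbound
  have hmax : ∀ i, ∃ x : Set ℕ, x.Infinite ∧
      enum x = fun n => max (enum (u i) n) (enum (b i) n) := fun i =>
    exists_infinite_enum_eq
      fun m n hmn => max_lt_max (enum_strictMono (hu i) hmn) (enum_strictMono (hb i) hmn)
  choose x hx hxenum using hmax
  refine ⟨x, hx, fun i n => by simp [hxenum], fun i j hji => ?_⟩
  rcases hji.lt_or_eq with hlt | rfl
  · exact hS.leS_of_leS_of_enum_le (hub i _ ⟨j, hlt, rfl⟩) fun n => by simp [hxenum]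
  · exact hS.leS_of_enum_le fun n => by simp [hxenum]

theorem exists_isScale_of_isUnbounded_range [LinearOrder ι] (hS : IsSemifilter S)
    {b : ι → Set ℕ} (hb : ∀ i, (b i).Infinite) (hunb : IsUnbounded S (range b))
    (hsmall : ∀ i : ι, #(Iio i) < bofS S) :
    ∃ X : Set (Set ℕ), IsScale S X ∧ #X ≤ #ι := by
  obtain ⟨x, hx, hbx, htower⟩ := exists_tower hS hb hsmall
  have hXinf : ∀ y ∈ range x, y.Infinite := by rintro _ ⟨i, rfl⟩; exact hx i
  have hXunb : IsUnbounded S (range x) :=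
    hunb.mono_enum hS (by rintro _ ⟨i, rfl⟩; exact ⟨x i, mem_range_self i, hbx i⟩)
  refine ⟨range x, ⟨hXinf, bofS_le_mk hXinf hXunb, fun c hc => ?_⟩, mk_range_le⟩
  obtain ⟨_, ⟨i₀, rfl⟩, hi₀⟩ := hunb.exists_leS_splus hS hc
  have hexc : {y ∈ range x | ¬ leS S (b i₀) y} ⊆ x '' Iio i₀ := by
    rintro _ ⟨⟨i, rfl⟩, hi⟩
    exact ⟨i, not_le.mp fun h => hi (htower i i₀ h), rfl⟩
  exact ⟨b i₀, hb i₀, hi₀, (mk_le_mk_of_subset hexc).trans_lt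
    (mk_image_le.trans_lt (hsmall i₀))⟩

end Tower

theorem stmt11 (S : Set (Set ℕ)) (hS : IsSemifilter S) :
    ∃ X : Set (Set ℕ), IsScale S X ∧ #X = bofS S := by
  obtain ⟨B, hB, hBunb, hBcard⟩ := exists_isUnbounded_mk_eq_bofS hS
  let ι := (bofS S).ord.ToType
  have hι : #ι = bofS S := by simp [ι]
  obtain ⟨e⟩ : Nonempty (ι ≃ B) := Cardinal.eq.mp (hι.trans hBcard.symm)
  have hrange : range (fun i => (e i : Set ℕ)) = B :=
    (e.surjective.range_comp Subtype.val).trans Subtype.range_coe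
  obtain ⟨X, hX, hXcard⟩ := exists_isScale_of_isUnbounded_range hS (fun i => hB _ (e i).2)
    (hrange.symm ▸ hBunb) fun i => (mk_Iio_lt i (by simp [ι])).trans_eq hι
  exact ⟨X, hX, le_antisymm (hXcard.trans_eq hι) hX.2.1⟩
end
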